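/- Let g = h^s where h ∈ F_{q^m}[x] is irreducible and s ≥ 1, and let deg g = t. Consider the map μ_g : F_{q^m}[x]/(g) → F_{q^m}[x]/(g) given by a mod g ↦ a^q - a mod g. Then the kernel of μ_g consists exactly of the classes of constant polynomials with coefficients in F_q; in particular dim_{F_q} ker μ_g = 1 and the image of μ_g has F_q-dimension mt - 1. -/

import Mathlib

/-!
The quotient map `F_{q^m}[x]/(h^s) → F_{q^m}[x]/(h)` onto a field has nilpotent kernel. If
`a^q = a`, the image of `a` is a root of `X^q - X` in a field, hence equals some `c ∈ F_q`;
then `a - c` is nilpotent and still satisfies `(a - c)^q = a - c`, which forces `a = c`.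
So `x ↦ x^q - x` is an `F_q`-linear map with one-dimensional kernel, and rank–nullity gives
the dimension `mt - 1` of its image.
-/

open Polynomial

theorem IsNilpotent.eq_zero_of_pow_eq_self {R : Type*} [Ring R] {x : R} (hx : IsNilpotent x)
    {n : ℕ} (hn : 2 ≤ n) (h : x ^ n = x) : x = 0 := by
  have hunit : IsUnit (x ^ (n - 1) - 1) := (hx.pow_of_pos (by omega)).isUnit_sub_one
  refine hunit.mul_left_eq_zero.mp ?_
  rw [mul_sub, mul_one, ← pow_succ', Nat.sub_add_cancel (by omega), h, sub_self]

theorem Ideal.Quotient.isNilpotent_of_factor_eq_zero {A : Type*} [CommRing A] {a : A} {s : ℕ}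
    (hle : Ideal.span {a ^ s} ≤ Ideal.span {a}) {y : A ⧸ Ideal.span {a ^ s}}
    (hy : Ideal.Quotient.factor hle y = 0) : IsNilpotent y := by
  obtain ⟨b, rfl⟩ := Ideal.Quotient.mk_surjective y
  rw [Ideal.Quotient.factor_mk, Ideal.Quotient.eq_zero_iff_mem, Ideal.mem_span_singleton] at hy
  refine ⟨s, ?_⟩
  rw [← map_pow, Ideal.Quotient.eq_zero_iff_mem, Ideal.mem_span_singleton]
  exact pow_dvd_pow_of_dvd hy s

theorem Polynomial.finrank_quotient_span_eq_finrank_mul_natDegree (F : Type*) {E : Type*}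
    [Field F] [Field E] [Algebra F E] (f : E[X]) :
    Module.finrank F (E[X] ⧸ Ideal.span {f}) = Module.finrank F E * f.natDegree := by
  rw [← Module.finrank_mul_finrank F E, finrank_quotient_span_eq_natDegree]

namespace FiniteField

variable {F : Type*} [Field F] [Fintype F]

theorem mem_range_algebraMap_of_pow_card_eq_self {K : Type*} [CommRing K] [IsDomain K]
    [Algebra F K] {x : K} (hx : x ^ Fintype.card F = x) : x ∈ Set.range (algebraMap F K) := by
  set P : F[X] := X ^ Fintype.card F - X
  have hcard : Multiset.card P.roots = P.natDegree := by
    rw [roots_X_pow_card_sub_X, X_pow_card_sub_X_natDegree_eq F Fintype.one_lt_card]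
    rfl
  have hroot : x ∈ (P.map (algebraMap F K)).roots := by
    rw [mem_roots (Polynomial.map_ne_zero (X_pow_card_sub_X_ne_zero F Fintype.one_lt_card))]
    simp [hx]
  rw [← roots_map_of_injective_of_card_eq_natDegree (algebraMap F K).injective hcard,
    roots_X_pow_card_sub_X] at hroot
  obtain ⟨c, -, rfl⟩ := Multiset.mem_map.mp hroot
  exact ⟨c, rfl⟩

theorem pow_card_eq_self_iff_mem_range_algebraMap {R K : Type*} [CommRing R] [Algebra F R]
    [CommRing K] [IsDomain K] [Algebra F K] (π : R →ₐ[F] K)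
    (hπ : ∀ y, π y = 0 → IsNilpotent y) {x : R} :
    x ^ Fintype.card F = x ↔ x ∈ Set.range (algebraMap F R) := by
  constructor
  · intro hx
    obtain ⟨c, hc⟩ := mem_range_algebraMap_of_pow_card_eq_self
      (by rw [← map_pow, hx] : π x ^ Fintype.card F = π x)
    set y := x - algebraMap F R c
    have hnil : IsNilpotent y := hπ y (by rw [map_sub, AlgHom.commutes, hc, sub_self])
    have hfix : y ^ Fintype.card F = y :=
      calc y ^ Fintype.card F = frobeniusAlgHom F R y := rfl
        _ = x ^ Fintype.card F - algebraMap F R c := by rw [map_sub, AlgHom.commutes]; rfl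
        _ = y := by rw [hx]
    exact ⟨c, (sub_eq_zero.mp (hnil.eq_zero_of_pow_eq_self Fintype.one_lt_card hfix)).symm⟩
  · rintro ⟨c, rfl⟩
    rw [← map_pow, pow_card]

variable (F) (R : Type*) [CommRing R] [Algebra F R]

/-- The map `μ_g : a ↦ a^q - a` of the paper, on an arbitrary `F`-algebra. -/
def artinSchreier : R →ₗ[F] R := (frobeniusAlgHom F R).toLinearMap - LinearMap.id

variable {F R}

theorem artinSchreier_apply (x : R) : artinSchreier F R x = x ^ Fintype.card F - x := rfl

section

variable (hfix : ∀ x : R, x ^ Fintype.card F = x ↔ x ∈ Set.range (algebraMap F R))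
include hfix

theorem ker_artinSchreier_eq_range :
    LinearMap.ker (artinSchreier F R) = LinearMap.range (Algebra.linearMap F R) := by
  ext x
  rw [LinearMap.mem_ker, artinSchreier_apply, sub_eq_zero, hfix]
  rfl

theorem finrank_ker_artinSchreier [Nontrivial R] :
    Module.finrank F (LinearMap.ker (artinSchreier F R)) = 1 := by
  rw [ker_artinSchreier_eq_range hfix,
    LinearMap.finrank_range_of_inj (algebraMap F R).injective, Module.finrank_self]

theorem finrank_range_artinSchreier [Nontrivial R] [FiniteDimensional F R] :
    Module.finrank F (LinearMap.range (artinSchreier F R)) = Module.finrank F R - 1 := by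
  rw [← LinearMap.finrank_range_add_finrank_ker (artinSchreier F R),
    finrank_ker_artinSchreier hfix, Nat.add_sub_cancel]

end

end FiniteField

open FiniteField in
theorem stmt4_general (F E : Type*) [Field F] [Fintype F] [Field E] [Fintype E]
    [Algebra F E] (q m : ℕ) (hq : Fintype.card F = q)
    (hE : Fintype.card E = q ^ m)
    (h : E[X]) (hirr : Irreducible h) (s : ℕ) (hs : 1 ≤ s)
    (g : E[X]) (hg : g = h ^ s) (t : ℕ) (ht : g.natDegree = t) :
    {x : E[X] ⧸ Ideal.span {g} | x ^ q - x = 0}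
      = Set.range (algebraMap F (E[X] ⧸ Ideal.span {g})) ∧
    Module.finrank F
      (Submodule.span F {x : E[X] ⧸ Ideal.span {g} | x ^ q - x = 0}) = 1 ∧
    Module.finrank F
      (Submodule.span F {y : E[X] ⧸ Ideal.span {g} | ∃ x, y = x ^ q - x})
      = m * t - 1 := by
  subst hq hg ht
  set R := E[X] ⧸ Ideal.span {h ^ s}
  have hle : Ideal.span {h ^ s} ≤ Ideal.span {h} :=
    Ideal.span_singleton_le_span_singleton.mpr (dvd_pow_self h (by omega))
  have : (Ideal.span {h}).IsPrime := (Ideal.span_singleton_prime hirr.ne_zero).mpr hirr.prime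
  have : Nontrivial R := (Ideal.Quotient.factorₐ F hle).domain_nontrivial
  have hfix (x : R) := pow_card_eq_self_iff_mem_range_algebraMap (x := x)
    (Ideal.Quotient.factorₐ F hle) fun _ ↦ Ideal.Quotient.isNilpotent_of_factor_eq_zero hle
  have hfinrankE : Module.finrank F E = m := Nat.pow_right_injective Fintype.one_lt_card
    ((Module.card_eq_pow_finrank (K := F) (V := E)).symm.trans hE)
  have hfinrank : Module.finrank F R = m * (h ^ s).natDegree := by
    rw [finrank_quotient_span_eq_finrank_mul_natDegree, hfinrankE]
  have : FiniteDimensional F R := Module.finite_of_finrank_pos <| hfinrank ▸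
    Nat.mul_pos (hfinrankE ▸ Module.finrank_pos)
      (natDegree_pow h s ▸ Nat.mul_pos hs hirr.natDegree_pos)
  have hker : {x : R | x ^ Fintype.card F - x = 0} = LinearMap.ker (artinSchreier F R) := by
    ext x
    rw [SetLike.mem_coe, LinearMap.mem_ker, artinSchreier_apply]
    rfl
  have hrange : {y : R | ∃ x, y = x ^ Fintype.card F - x} =
      LinearMap.range (artinSchreier F R) :=
    Set.ext fun y ↦ exists_congr fun x ↦ eq_comm
  refine ⟨Set.ext fun x ↦ sub_eq_zero.trans (hfix x), ?_, ?_⟩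
  · rw [hker, Submodule.span_eq, finrank_ker_artinSchreier hfix]
  · rw [hrange, Submodule.span_eq, finrank_range_artinSchreier hfix, hfinrank]

/-- For `g = h^s` a power of an irreducible polynomial of total degree `t`,
the kernel of `μ_g : a mod g ↦ a^q - a mod g` on `F_{q^m}[x]/(g)` consists
exactly of the classes of constants from `F_q` (so has `F_q`-dimension 1),
and the image of `μ_g` has `F_q`-dimension `m*t - 1`. -/
theorem stmt4 (F E : Type*) [Field F] [Fintype F] [Field E] [Fintype E]
    [Algebra F E] (q m : ℕ) (hq : Fintype.card F = q)
    (hE : Fintype.card E = q ^ m) (hm : 2 ≤ m)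
    (h : E[X]) (hirr : Irreducible h) (s : ℕ) (hs : 1 ≤ s)
    (g : E[X]) (hg : g = h ^ s) (t : ℕ) (ht : g.natDegree = t) :
    {x : E[X] ⧸ Ideal.span {g} | x ^ q - x = 0}
      = Set.range (algebraMap F (E[X] ⧸ Ideal.span {g})) ∧
    Module.finrank F
      (Submodule.span F {x : E[X] ⧸ Ideal.span {g} | x ^ q - x = 0}) = 1 ∧
    Module.finrank F
      (Submodule.span F {y : E[X] ⧸ Ideal.span {g} | ∃ x, y = x ^ q - x})
      = m * t - 1 :=
  stmt4_general F E q m hq hE h hirr s hs g hg t ht
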